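/- Let G be a group generated by involutions ρ₀, ρ₁, ρ₂ with (ρ₀ρ₂)² = 1, and set σ₁ = ρ₀ρ₁, σ₂ = ρ₁ρ₂. If σ₂⁻¹σ₁ = σ₁^i ρ₁ σ₂^j, then σ₁ σ₂^(j+2) σ₁⁻¹ = σ₂^(-(j+2)); in particular ⟨σ₂^(j+2)⟩ is normal in G. -/

import Mathlib

/-!
Since `ρ₁` inverts `σ₁` by conjugation, `ρ₁ σ₁^(-i)` is an involution, hence so is its conjugate
`σ₂ ρ₁ σ₁^(-i) σ₂⁻¹`, which the relation identifies with `σ₂^(j+1) σ₁⁻¹`. Unwinding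
`(σ₂^(j+1) σ₁⁻¹)² = 1` with `(σ₁σ₂)² = (ρ₀ρ₂)² = 1` gives `σ₁ σ₂^(j+2) σ₁⁻¹ = σ₂^(-(j+2))`.
Thus `σ₁`, `ρ₁` invert `z = σ₂^(j+2)` and `σ₂` centralizes it, so the normalizer of `⟨z⟩` contains
`ρ₀ = σ₁ρ₁`, `ρ₁` and `ρ₂ = ρ₁σ₂`, which generate `G`.
-/

section

open Subgroup

variable {G : Type*} [Group G]

lemma inv_eq_self_of_sq_eq_one {x : G} (hx : x ^ 2 = 1) : x⁻¹ = x :=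
  inv_eq_of_mul_eq_one_right (by rwa [← sq])

lemma conj_mul_eq_inv_of_sq_eq_one_right {x y : G} (hx : x ^ 2 = 1) (hy : y ^ 2 = 1) :
    y * (x * y) * y⁻¹ = (x * y)⁻¹ := by
  rw [← mul_assoc, mul_inv_cancel_right, mul_inv_rev, inv_eq_self_of_sq_eq_one hx,
    inv_eq_self_of_sq_eq_one hy]

lemma conj_mul_eq_inv_of_sq_eq_one_left {x y : G} (hx : x ^ 2 = 1) (hy : y ^ 2 = 1) :
    x * (x * y) * x⁻¹ = (x * y)⁻¹ := by
  rw [← mul_assoc, ← sq, hx, one_mul, mul_inv_rev, inv_eq_self_of_sq_eq_one hy]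

lemma conj_zpow_eq_inv_of_conj_eq_inv {g x : G} (h : g * x * g⁻¹ = x⁻¹) (n : ℤ) :
    g * x ^ n * g⁻¹ = (x ^ n)⁻¹ := by
  rw [← conj_zpow, h, inv_zpow]

lemma sq_mul_eq_one_of_conj_eq_inv {r x : G} (hr : r ^ 2 = 1) (h : r * x * r⁻¹ = x⁻¹) :
    (r * x) ^ 2 = 1 := by
  calc (r * x) ^ 2 = r * x * r⁻¹ * r ^ 2 * x := by rw [sq, sq]; group
    _ = 1 := by rw [h, hr, mul_one, inv_mul_cancel]

lemma conj_zpow_add_two_eq_zpow_neg {a b r : G} {i j : ℤ} (hr : r ^ 2 = 1)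
    (hra : r * a * r⁻¹ = a⁻¹) (hab : (a * b) ^ 2 = 1)
    (hrel : b⁻¹ * a = a ^ i * r * b ^ j) :
    a * b ^ (j + 2) * a⁻¹ = b ^ (-(j + 2)) := by
  have hs : b ^ (j + 1) * a⁻¹ = b * (r * a ^ (-i)) * b⁻¹ := by
    have hbj : b ^ j = r⁻¹ * a ^ (-i) * (b⁻¹ * a) := by rw [hrel]; group
    rw [add_comm, zpow_add, zpow_one, hbj, inv_eq_self_of_sq_eq_one hr]
    group
  have hs2 : (b ^ (j + 1) * a⁻¹) ^ 2 = 1 := by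
    rw [hs, conj_pow, sq_mul_eq_one_of_conj_eq_inv hr
      (by rw [conj_zpow_eq_inv_of_conj_eq_inv hra]), mul_one, mul_inv_cancel]
  rw [zpow_neg, eq_inv_iff_mul_eq_one]
  calc a * b ^ (j + 2) * a⁻¹ * b ^ (j + 2) = a * b * (b ^ (j + 1) * a⁻¹) ^ 2 * a * b := by
        rw [sq]; group
    _ = 1 := by rw [hs2, mul_one, mul_assoc, ← sq, hab]

lemma mem_normalizer_zpowers_of_zpowers_conj_eq {g z : G}
    (h : zpowers (g * z * g⁻¹) = zpowers z) : g ∈ normalizer (zpowers z : Set G) := by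
  rw [mem_normalizer_iff_map_conj_eq]
  exact (MonoidHom.map_zpowers (MulAut.conj g).toMonoidHom z).trans h

lemma mem_normalizer_zpowers_of_conj_eq_inv {g z : G} (h : g * z * g⁻¹ = z⁻¹) :
    g ∈ normalizer (zpowers z : Set G) :=
  mem_normalizer_zpowers_of_zpowers_conj_eq (by rw [h, zpowers_inv])

end

theorem stmt_5 {G : Type*} [Group G] (ρ0 ρ1 ρ2 : G)
    (h0 : ρ0 ^ 2 = 1) (h1 : ρ1 ^ 2 = 1) (h2 : ρ2 ^ 2 = 1)
    (h02 : (ρ0 * ρ2) ^ 2 = 1)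
    (hgen : Subgroup.closure {ρ0, ρ1, ρ2} = ⊤)
    (σ1 σ2 : G) (hσ1 : σ1 = ρ0 * ρ1) (hσ2 : σ2 = ρ1 * ρ2)
    (i j : ℤ) (hrel : σ2⁻¹ * σ1 = σ1 ^ i * ρ1 * σ2 ^ j) :
    σ1 * σ2 ^ (j + 2) * σ1⁻¹ = σ2 ^ (-(j + 2)) ∧
    (Subgroup.zpowers (σ2 ^ (j + 2))).Normal := by
  have hσ1σ2 : (σ1 * σ2) ^ 2 = 1 := by
    rwa [hσ1, hσ2, mul_assoc, ← mul_assoc ρ1, ← sq, h1, one_mul]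
  have hρ1σ1 : ρ1 * σ1 * ρ1⁻¹ = σ1⁻¹ := hσ1 ▸ conj_mul_eq_inv_of_sq_eq_one_right h0 h1
  have hρ1σ2 : ρ1 * σ2 * ρ1⁻¹ = σ2⁻¹ := hσ2 ▸ conj_mul_eq_inv_of_sq_eq_one_left h1 h2
  have hσ1z := conj_zpow_add_two_eq_zpow_neg h1 hρ1σ1 hσ1σ2 hrel
  refine ⟨hσ1z, ?_⟩
  have hσ1N := mem_normalizer_zpowers_of_conj_eq_inv (hσ1z.trans (zpow_neg σ2 _))
  have hρ1N :=
    mem_normalizer_zpowers_of_conj_eq_inv (conj_zpow_eq_inv_of_conj_eq_inv hρ1σ2 (j + 2))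
  have hσ2N : σ2 ∈ Subgroup.normalizer (Subgroup.zpowers (σ2 ^ (j + 2)) : Set G) :=
    mem_normalizer_zpowers_of_zpowers_conj_eq
      (by rw [(Commute.self_zpow σ2 _).eq, mul_inv_cancel_right])
  have hρ0N : ρ0 ∈ Subgroup.normalizer (Subgroup.zpowers (σ2 ^ (j + 2)) : Set G) := by
    rw [show ρ0 = σ1 * ρ1 by rw [hσ1, mul_assoc, ← sq, h1, mul_one]]
    exact mul_mem hσ1N hρ1N
  have hρ2N : ρ2 ∈ Subgroup.normalizer (Subgroup.zpowers (σ2 ^ (j + 2)) : Set G) := by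
    rw [show ρ2 = ρ1 * σ2 by rw [hσ2, ← mul_assoc, ← sq, h1, one_mul]]
    exact mul_mem hρ1N hσ2N
  rw [← Subgroup.normalizer_eq_top_iff, eq_top_iff, ← hgen, Subgroup.closure_le]
  rintro g (rfl | rfl | rfl) <;> assumption
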